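/- Under the hypotheses of the resurfacing bound (L_u β-smooth, iterates w_{t+1} = w_t - η g_t with ‖g_t‖ ≤ G, average alignment (1/T)Σ_{t<T}⟨∇L_u(w_0), g_t⟩ ≥ ρ > 0), if additionally 1 ≤ T < 2ρ/(β η G²) with β, η, G > 0, then L_u(w_T) < L_u(w_0). -/

import Mathlib

open scoped RealInnerProductSpace

/-!
Let `S = ∑_{t<T} g t`, so that `w T = w 0 - η • S`. The descent lemma for a `β`-smooth function
bounds `L (w T)` by `L (w 0) - η ⟪∇L (w 0), S⟫ + β η² ‖S‖² / 2`. The alignment hypothesis makes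
the linear term at most `-η T ρ`, while `‖S‖ ≤ T G` bounds the quadratic one by `β η² T² G² / 2`,
which is smaller than `η T ρ` exactly when `T < 2ρ / (β η G²)`.
-/

section Descent

variable {E : Type*} [NormedAddCommGroup E] [InnerProductSpace ℝ E] [CompleteSpace E]
  {f : E → ℝ} {f' : E → E} {β : ℝ}

theorem HasGradientAt.hasDerivAt_comp_add_smul {g x v : E} {t : ℝ}
    (hf : HasGradientAt f g (x + t • v)) :
    HasDerivAt (fun s : ℝ => f (x + s • v)) ⟪g, v⟫ t := by
  have hline : HasDerivAt (fun s : ℝ => x + s • v) v t := by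
    simpa using ((hasDerivAt_id t).smul_const v).const_add x
  exact hf.hasFDerivAt.comp_hasDerivAt t hline

theorem apply_add_le_of_lipschitz_gradient (hf : ∀ x, HasGradientAt f (f' x) x)
    (hlip : ∀ x y, ‖f' x - f' y‖ ≤ β * ‖x - y‖) (x v : E) :
    f (x + v) ≤ f x + ⟪f' x, v⟫ + β / 2 * ‖v‖ ^ 2 := by
  -- `f` minus its quadratic upper model along the segment is antitone for `t ≥ 0`.
  set φ : ℝ → ℝ := fun t => f (x + t • v) - t * ⟪f' x, v⟫ - β / 2 * t ^ 2 * ‖v‖ ^ 2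
  have hφ : ∀ t, HasDerivAt φ (⟪f' (x + t • v) - f' x, v⟫ - β * t * ‖v‖ ^ 2) t := by
    intro t
    have := (((hf (x + t • v)).hasDerivAt_comp_add_smul (x := x)).sub
      ((hasDerivAt_id t).mul_const ⟪f' x, v⟫)).sub
        (((hasDerivAt_pow 2 t).const_mul (β / 2)).mul_const (‖v‖ ^ 2))
    refine this.congr_deriv ?_
    simp only [inner_sub_left]
    ring
  have hφ'_nonpos : ∀ t ∈ interior (Set.Ici (0 : ℝ)),
      ⟪f' (x + t • v) - f' x, v⟫ - β * t * ‖v‖ ^ 2 ≤ 0 := by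
    intro t ht
    rw [interior_Ici] at ht
    rw [sub_nonpos]
    calc ⟪f' (x + t • v) - f' x, v⟫ ≤ ‖f' (x + t • v) - f' x‖ * ‖v‖ := real_inner_le_norm _ _
      _ ≤ β * ‖t • v‖ * ‖v‖ := by
        gcongr
        simpa using hlip (x + t • v) x
      _ = β * t * ‖v‖ ^ 2 := by rw [norm_smul, Real.norm_of_nonneg ht.le]; ring
  have hanti := antitoneOn_of_hasDerivWithinAt_nonpos (convex_Ici 0)
    (fun t _ => (hφ t).continuousAt.continuousWithinAt) (fun t _ => (hφ t).hasDerivWithinAt)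
    hφ'_nonpos
  have := hanti Set.self_mem_Ici (show (1 : ℝ) ∈ Set.Ici 0 by norm_num) zero_le_one
  simp only [φ, one_smul, zero_smul, add_zero, one_pow, one_mul, zero_mul, zero_pow two_ne_zero,
    mul_zero, sub_zero] at this
  linarith

theorem apply_sub_smul_le_of_lipschitz_gradient (hf : ∀ x, HasGradientAt f (f' x) x)
    (hlip : ∀ x y, ‖f' x - f' y‖ ≤ β * ‖x - y‖) (x v : E) (η : ℝ) :
    f (x - η • v) ≤ f x - η * ⟪f' x, v⟫ + β / 2 * η ^ 2 * ‖v‖ ^ 2 := by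
  have := apply_add_le_of_lipschitz_gradient hf hlip x (-(η • v))
  rwa [← sub_eq_add_neg, inner_neg_right, real_inner_smul_right, norm_neg, norm_smul,
    mul_pow, Real.norm_eq_abs, sq_abs, ← sub_eq_add_neg, ← mul_assoc] at this

end Descent

theorem eq_sub_smul_sum_of_eq_sub_smul {R M : Type*} [Ring R] [AddCommGroup M] [Module R M]
    {η : R} {g w : ℕ → M} (hw : ∀ t, w (t + 1) = w t - η • g t) (n : ℕ) :
    w n = w 0 - η • ∑ t ∈ Finset.range n, g t := by
  induction n with
  | zero => simp
  | succ n ih => rw [hw, ih, Finset.sum_range_succ, smul_add]; abel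

theorem stmt_6_general {d : ℕ} (L : EuclideanSpace ℝ (Fin d) → ℝ)
    (gradL : EuclideanSpace ℝ (Fin d) → EuclideanSpace ℝ (Fin d))
    (β η G ρ : ℝ) (hβ : 0 < β) (hη : 0 < η) (hG : 0 < G)
    (hdiff : ∀ x, HasGradientAt L (gradL x) x)
    (hlip : ∀ x y, ‖gradL x - gradL y‖ ≤ β * ‖x - y‖)
    (g w : ℕ → EuclideanSpace ℝ (Fin d))
    (hg : ∀ t, ‖g t‖ ≤ G)
    (hw : ∀ t, w (t + 1) = w t - η • g t)
    (T : ℕ) (hT : 1 ≤ T) (hTwin : (T : ℝ) < 2 * ρ / (β * η * G ^ 2))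
    (halign : ρ ≤ (1 / (T : ℝ)) * ∑ t ∈ Finset.range T, ⟪gradL (w 0), g t⟫) :
    L (w T) < L (w 0) := by
  set S := ∑ t ∈ Finset.range T, g t
  have hTpos : (0 : ℝ) < T := by exact_mod_cast hT
  have hS_align : T * ρ ≤ ⟪gradL (w 0), S⟫ := by
    rw [inner_sum, ← le_div_iff₀' hTpos, div_eq_inv_mul, ← one_div]
    exact halign
  have hS_norm : ‖S‖ ≤ T * G := by
    simpa using norm_sum_le_of_le (Finset.range T) fun t _ => hg t
  have hstep : β * η * T * G ^ 2 < 2 * ρ := by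
    rw [lt_div_iff₀ (by positivity)] at hTwin
    linarith
  calc L (w T) = L (w 0 - η • S) := by rw [eq_sub_smul_sum_of_eq_sub_smul hw]
    _ ≤ L (w 0) - η * ⟪gradL (w 0), S⟫ + β / 2 * η ^ 2 * ‖S‖ ^ 2 :=
      apply_sub_smul_le_of_lipschitz_gradient hdiff hlip _ _ _
    _ ≤ L (w 0) - η * (T * ρ) + β / 2 * η ^ 2 * (T * G) ^ 2 := by gcongr
    _ < L (w 0) := by nlinarith [mul_pos hη hTpos]

theorem stmt_6 {d : ℕ} (L : EuclideanSpace ℝ (Fin d) → ℝ)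
    (gradL : EuclideanSpace ℝ (Fin d) → EuclideanSpace ℝ (Fin d))
    (β η G ρ : ℝ) (hβ : 0 < β) (hη : 0 < η) (hG : 0 < G) (hρ : 0 < ρ)
    (hdiff : ∀ x, HasGradientAt L (gradL x) x)
    (hlip : ∀ x y, ‖gradL x - gradL y‖ ≤ β * ‖x - y‖)
    (g w : ℕ → EuclideanSpace ℝ (Fin d))
    (hg : ∀ t, ‖g t‖ ≤ G)
    (hw : ∀ t, w (t + 1) = w t - η • g t)
    (T : ℕ) (hT : 1 ≤ T) (hTwin : (T : ℝ) < 2 * ρ / (β * η * G ^ 2))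
    (halign : ρ ≤ (1 / (T : ℝ)) * ∑ t ∈ Finset.range T, ⟪gradL (w 0), g t⟫) :
    L (w T) < L (w 0) :=
  stmt_6_general L gradL β η G ρ hβ hη hG hdiff hlip g w hg hw T hT hTwin halign
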